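/- arXiv:1907.00077 — 4 statements merged into one kernel-verified Lean document; each statement's English description precedes it below -/
import Mathlib

section
/- Define a right action of the symmetric group S_n on words of length n by (u sigma)_i = u_{sigma(i)}. For packed words u, v of length n and a permutation tau of n, pack of the biword (u tau over v) equals (pack of the biword (u over v tau^{-1})) acted on by tau. -/
open scoped Classical

/-- A word `w` (of length `n`, over the ordered alphabet of positive integers)
is packed if its letters are exactly `1, ..., k` for some `k`. -/
def IsPackedF {n : ℕ} (w : Fin n → ℕ) : Prop :=
  (∀ i, 0 < w i) ∧ ∀ i, ∀ m, 0 < m → m < w i → ∃ j, w j = m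

/-- The packing of the biword `(u over v)`: letter `i` is replaced by the rank of the
biletter `(u_i, v_i)` in the lexicographic order (priority to the top letter) among the
biletters occurring. -/
noncomputable def packP {n : ℕ} (u v : Fin n → ℕ) : Fin n → ℕ := fun i =>
  ((Finset.univ.image fun j => (u j, v j)).filter
    fun p => p.1 < u i ∨ (p.1 = u i ∧ p.2 ≤ v i)).card

/-- For packed words `u, v` of length `n` and a permutation `τ`,
`pack (uτ over v) = (pack (u over v τ⁻¹)) · τ`, where the right action is
`(u σ)_i = u_{σ(i)}`. -/
theorem stmt4 {n : ℕ} (u v : Fin n → ℕ) (hu : IsPackedF u) (hv : IsPackedF v)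
    (τ : Equiv.Perm (Fin n)) :
    packP (fun i => u (τ i)) v = fun i => packP u (fun j => v (τ⁻¹ j)) (τ i) := by
  funext i
  unfold packP
  have himg : (Finset.univ.image fun j => (u (τ j), v j))
      = Finset.univ.image fun j => (u j, v (τ⁻¹ j)) := by
    ext p
    simp only [Finset.mem_image, Finset.mem_univ, true_and]
    constructor
    · rintro ⟨j, rfl⟩; exact ⟨τ j, by simp⟩
    · rintro ⟨j, rfl⟩; exact ⟨τ⁻¹ j, by simp⟩
  rw [himg]
  simp
end

section
/- Let G be a Dyck graph on vertex set [n] and H its restriction to [n-1]. For any permutation sigma of [n-1], the sum over the n permutations tau obtained by inserting the letter n into sigma of t^{st_G(tau)} equals (1 + t + ... + t^{n-1}) times t^{st_H(sigma)}. -/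
open scoped Classical

/-- A Dyck graph: if `(i,j)` is an edge then so is every `(i',j')` with
`i ≤ i' < j' ≤ j`. -/
def DyckGraph {n : ℕ} (G : SimpleGraph (Fin n)) : Prop :=
  ∀ i j i' j' : Fin n, G.Adj i j → i ≤ i' → i' < j' → j' ≤ j → G.Adj i' j'

/-- `inv_G(σ)`: the number of edges `(i < j)` of `G` such that `i` is to the right
of `j` in the one-line notation of `σ`. -/
noncomputable def invG {n : ℕ} (G : SimpleGraph (Fin n)) (σ : Equiv.Perm (Fin n)) : ℕ :=
  (Finset.univ.filter fun p : Fin n × Fin n =>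
    p.1 < p.2 ∧ G.Adj p.1 p.2 ∧ σ⁻¹ p.2 < σ⁻¹ p.1).card

/-- `maj_G(σ)`: the sum of the (1-based) positions `i` such that `σ_i > σ_{i+1}`
and `(σ_{i+1}, σ_i)` is not an edge of `G`. -/
noncomputable def majG {n : ℕ} (G : SimpleGraph (Fin n)) (σ : Equiv.Perm (Fin n)) : ℕ :=
  ∑ k ∈ Finset.range n,
    if h : k + 1 < n then
      (if σ ⟨k + 1, h⟩ < σ ⟨k, Nat.lt_of_succ_lt h⟩ ∧
          ¬ G.Adj (σ ⟨k + 1, h⟩) (σ ⟨k, Nat.lt_of_succ_lt h⟩) then k + 1 else 0)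
    else 0

/-- The Mahonian statistic `st_G = inv_G + maj_G`. -/
noncomputable def stG {n : ℕ} (G : SimpleGraph (Fin n)) (σ : Equiv.Perm (Fin n)) : ℕ :=
  invG G σ + majG G σ

/-- `τ : S_{m+1}` restricts (after deleting the maximal value) to `σ : S_m`:
the word obtained from the one-line notation of `τ` by removing the letter `m`
(the largest value) is the one-line notation of `σ`. -/
def Restricts {m : ℕ} (τ : Equiv.Perm (Fin (m + 1))) (σ : Equiv.Perm (Fin m)) : Prop :=
  ∀ i : Fin m, ((τ ((τ⁻¹ (Fin.last m)).succAbove i) : Fin (m + 1)) : ℕ) = (σ i : ℕ)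

/-! Write `τ_p` for `σ` with the letter `m` inserted at position `p`. Letters of `σ` keep their
relative order, so `inv_G(τ_p)` exceeds `inv_H(σ)` by the number of neighbours of `m` to the right
of `p`. The `G`-descents of `σ` left of `p` stay, those right of `p` move one step right, the one
at `p` (if any) disappears, and a new one appears right after `m` unless `σ_p` is adjacent to `m`.
Altogether `st_G(τ_p) = st_H(σ) + c(p)`, where `c` only depends on the set `U` of positions of
`σ` holding a neighbour of `m` or a `G`-descent; the Dyck condition makes these two kinds of
positions disjoint. Then `c` sends `m` to `0`, the positions in `U` (from right to left) to
`1, …, |U|` and the others (from left to right) to `|U| + 1, …, m`, so it permutes `{0, …, m}`. -/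

open Finset

section Insertion

variable {m : ℕ}

/-- The word of `σ` with the letter `m` inserted at the (0-based) position `p`. -/
def insertMax (σ : Equiv.Perm (Fin m)) (p : Fin (m + 1)) : Equiv.Perm (Fin (m + 1)) :=
  (finSuccEquiv' p).trans (σ.optionCongr.trans (finSuccEquiv' (Fin.last m)).symm)

variable (σ : Equiv.Perm (Fin m)) (p : Fin (m + 1))

@[simp]
lemma insertMax_self : insertMax σ p p = Fin.last m := by
  simp [insertMax, finSuccEquiv'_symm_none]

@[simp]
lemma insertMax_succAbove (i : Fin m) : insertMax σ p (p.succAbove i) = (σ i).castSucc := by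
  simp [insertMax, finSuccEquiv'_symm_some, Fin.succAbove_last]

@[simp]
lemma insertMax_inv_last : (insertMax σ p)⁻¹ (Fin.last m) = p := by
  rw [Equiv.Perm.inv_eq_iff_eq, insertMax_self]

@[simp]
lemma insertMax_inv_castSucc (a : Fin m) :
    (insertMax σ p)⁻¹ a.castSucc = p.succAbove (σ⁻¹ a) := by
  rw [Equiv.Perm.inv_eq_iff_eq, insertMax_succAbove]
  simp

lemma restricts_insertMax : Restricts (insertMax σ p) σ := by
  simp [Restricts]

lemma eq_insertMax_of_restricts {τ : Equiv.Perm (Fin (m + 1))} (h : Restricts τ σ) :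
    τ = insertMax σ (τ⁻¹ (Fin.last m)) := by
  ext x
  rcases eq_or_ne x (τ⁻¹ (Fin.last m)) with rfl | hx
  · simp
  · obtain ⟨i, rfl⟩ := Fin.exists_succAbove_eq hx
    simpa using h i

lemma sum_restricts_eq_sum_insertMax {M : Type*} [AddCommMonoid M]
    (f : Equiv.Perm (Fin (m + 1)) → M) :
    ∑ τ : Equiv.Perm (Fin (m + 1)), (if Restricts τ σ then f τ else 0) =
      ∑ p : Fin (m + 1), f (insertMax σ p) := by
  rw [← sum_filter]
  refine sum_nbij' (fun τ => τ⁻¹ (Fin.last m)) (insertMax σ) (by simp)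
    (fun p _ => by simpa using restricts_insertMax σ p) (fun τ hτ => ?_) (by simp) (fun τ hτ => ?_)
  · exact (eq_insertMax_of_restricts σ (mem_filter.mp hτ).2).symm
  · rw [← eq_insertMax_of_restricts σ (mem_filter.mp hτ).2]

lemma insertMax_apply_of_lt {k : ℕ} (hk : k < m) (hkp : k < p) :
    insertMax σ p ⟨k, by omega⟩ = (σ ⟨k, hk⟩).castSucc := by
  rw [← insertMax_succAbove σ p, Fin.succAbove_of_castSucc_lt _ _ (by simpa [Fin.lt_def])]
  rfl

lemma insertMax_apply_succ_of_le {k : ℕ} (hk : k < m) (hpk : p ≤ k) :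
    insertMax σ p ⟨k + 1, by omega⟩ = (σ ⟨k, hk⟩).castSucc := by
  rw [← insertMax_succAbove σ p, Fin.succAbove_of_le_castSucc _ _ (by simpa [Fin.le_def])]
  rfl

lemma insertMax_apply_eq_last {k : ℕ} (hk : k < m + 1) (hkp : k = p) :
    insertMax σ p ⟨k, hk⟩ = Fin.last m := by
  subst hkp
  exact insertMax_self σ p

end Insertion

section Inversions

variable {m : ℕ}

lemma invG_eq_sum {n : ℕ} (G : SimpleGraph (Fin n)) (π : Equiv.Perm (Fin n)) :
    invG G π = ∑ a, ∑ b, if a < b ∧ G.Adj a b ∧ π⁻¹ b < π⁻¹ a then 1 else 0 := by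
  rw [invG, card_filter, Fintype.sum_prod_type]

variable (G : SimpleGraph (Fin (m + 1))) (σ : Equiv.Perm (Fin m)) (p : Fin (m + 1))

/-- The (0-based) positions of `σ` holding a letter adjacent in `G` to the new letter `m`. -/
noncomputable def posAdjLast : Finset ℕ :=
  (range m).filter fun k => ∃ h : k < m, G.Adj (σ ⟨k, h⟩).castSucc (Fin.last m)

lemma invG_insertMax :
    invG G (insertMax σ p) =
      invG (G.comap Fin.castSucc) σ + #((posAdjLast G σ).filter ((p : ℕ) ≤ ·)) := by
  have hlast : #((posAdjLast G σ).filter ((p : ℕ) ≤ ·)) =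
      ∑ a : Fin m, if G.Adj a.castSucc (Fin.last m) ∧ p < p.succAbove (σ⁻¹ a) then 1 else 0 := by
    rw [← Equiv.sum_comp σ, card_filter, posAdjLast, sum_filter, ← Fin.sum_univ_eq_sum_range]
    refine sum_congr rfl fun i _ => ?_
    simp [Fin.lt_succAbove_iff_le_castSucc, Fin.le_def, ite_and]
  rw [hlast, invG_eq_sum, invG_eq_sum, Fin.sum_univ_castSucc, ← sum_add_distrib]
  simp only [Fin.sum_univ_castSucc, Fin.castSucc_lt_castSucc_iff, SimpleGraph.comap_adj,
    insertMax_inv_castSucc, insertMax_inv_last, Fin.succAbove_lt_succAbove_iff,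
    Fin.castSucc_lt_last, true_and, not_lt_of_ge (Fin.le_last _), false_and,
    if_false, sum_const_zero, add_zero]

end Inversions

section Descents

variable {m : ℕ}

/-- `Des_G(π)` in the paper's 1-based positions: `i` is a `G`-descent when the letters at the
0-based positions `i - 1` and `i` decrease and are not adjacent in `G`. -/
noncomputable def desG {n : ℕ} (G : SimpleGraph (Fin n)) (π : Equiv.Perm (Fin n)) : Finset ℕ :=
  (range n).filter fun i => ∃ (h : i < n) (h₀ : 0 < i),
    π ⟨i, h⟩ < π ⟨i - 1, by omega⟩ ∧ ¬ G.Adj (π ⟨i, h⟩) (π ⟨i - 1, by omega⟩)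

lemma desG_subset_range {n : ℕ} (G : SimpleGraph (Fin n)) (π : Equiv.Perm (Fin n)) :
    desG G π ⊆ range n :=
  filter_subset _ _

lemma majG_eq_sum_desG {n : ℕ} (G : SimpleGraph (Fin n)) (π : Equiv.Perm (Fin n)) :
    majG G π = ∑ i ∈ desG G π, i := by
  have hsub : desG G π ⊆ range (n + 1) :=
    (desG_subset_range G π).trans (range_subset_range.mpr n.le_succ)
  calc majG G π = ∑ k ∈ range n, if k + 1 ∈ desG G π then k + 1 else 0 := by
        refine sum_congr rfl fun k _ => ?_
        by_cases h : k + 1 < n <;> simp [desG, h]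
    _ = ∑ i ∈ range (n + 1), if i ∈ desG G π then i else 0 := by
        rw [sum_range_succ' (fun i => if i ∈ desG G π then i else 0)]
        simp
    _ = ∑ i ∈ desG G π, i := by rw [sum_ite_mem, inter_eq_right.mpr hsub]

lemma succ_mem_desG_iff {n : ℕ} {G : SimpleGraph (Fin n)} {π : Equiv.Perm (Fin n)} {j : ℕ}
    (h : j + 1 < n) :
    j + 1 ∈ desG G π ↔
      π ⟨j + 1, h⟩ < π ⟨j, by omega⟩ ∧ ¬ G.Adj (π ⟨j + 1, h⟩) (π ⟨j, by omega⟩) := by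
  simp [desG, h]

variable (G : SimpleGraph (Fin (m + 1))) (σ : Equiv.Perm (Fin m)) (p : Fin (m + 1))

lemma succ_mem_desG_insertMax_of_lt {j : ℕ} (h : j + 1 < p) :
    j + 1 ∈ desG G (insertMax σ p) ↔ j + 1 ∈ desG (G.comap Fin.castSucc) σ := by
  have hjm : j + 1 < m := by omega
  rw [succ_mem_desG_iff (by omega), succ_mem_desG_iff hjm, insertMax_apply_of_lt σ p hjm h,
    insertMax_apply_of_lt σ p (by omega) (by omega)]
  simp only [Fin.castSucc_lt_castSucc_iff, SimpleGraph.comap_adj]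

lemma succ_not_mem_desG_insertMax {j : ℕ} (h : j + 1 = p) :
    j + 1 ∉ desG G (insertMax σ p) := by
  rw [succ_mem_desG_iff (by omega), insertMax_apply_eq_last σ p _ h]
  simp [not_lt_of_ge (Fin.le_last _)]

lemma val_succ_mem_desG_insertMax_iff :
    (p : ℕ) + 1 ∈ desG G (insertMax σ p) ↔ (p : ℕ) ∈ range m \ posAdjLast G σ := by
  rcases lt_or_ge (p : ℕ) m with hpm | hpm
  · rw [succ_mem_desG_iff (by omega), insertMax_apply_succ_of_le σ p hpm le_rfl,
      insertMax_apply_eq_last σ p _ rfl]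
    simp [posAdjLast, hpm, Fin.castSucc_lt_last]
  · have := mem_range.not.mpr (by omega : ¬ (p : ℕ) + 1 < m + 1)
    simp only [mem_sdiff, mem_range, not_lt_of_ge hpm, false_and, iff_false]
    exact fun hm => this (desG_subset_range _ _ hm)

lemma succ_mem_desG_insertMax_of_gt {j : ℕ} (h : p < j) :
    j + 1 ∈ desG G (insertMax σ p) ↔ j ∈ desG (G.comap Fin.castSucc) σ := by
  rcases lt_or_ge j m with hjm | hjm
  · obtain ⟨k, rfl⟩ : ∃ k, j = k + 1 := ⟨j - 1, by omega⟩
    rw [succ_mem_desG_iff (by omega), succ_mem_desG_iff hjm,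
      insertMax_apply_succ_of_le σ p hjm (by omega),
      insertMax_apply_succ_of_le σ p (by omega) (by omega)]
    simp only [Fin.castSucc_lt_castSucc_iff, SimpleGraph.comap_adj]
  · have hl := mem_range.not.mpr (by omega : ¬ j + 1 < m + 1)
    have hr := mem_range.not.mpr (by omega : ¬ j < m)
    exact iff_of_false (fun hm => hl (desG_subset_range _ _ hm))
      (fun hm => hr (desG_subset_range _ _ hm))

lemma desG_insertMax :
    desG G (insertMax σ p) =
      (desG (G.comap Fin.castSucc) σ).filter (· < (p : ℕ)) ∪
        ((desG (G.comap Fin.castSucc) σ).filter ((p : ℕ) < ·) ∪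
          (range m \ posAdjLast G σ).filter (· = (p : ℕ))).map (addRightEmbedding 1) := by
  ext i
  rcases i with _ | j
  · simp [desG]
  simp only [mem_union, mem_filter, mem_map, addRightEmbedding_apply, add_left_inj,
    exists_eq_right]
  obtain h | h | h | h : j + 1 < p ∨ j + 1 = p ∨ j = p ∨ p < j := by omega
  · simp [succ_mem_desG_insertMax_of_lt G σ p h, h, show ¬ (p : ℕ) < j by omega,
      show j ≠ p by omega]
  · simp [succ_not_mem_desG_insertMax G σ p h, show ¬ j + 1 < p by omega,
      show ¬ (p : ℕ) < j by omega, show j ≠ p by omega]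
  · subst h
    simp [val_succ_mem_desG_insertMax_iff]
  · simp [succ_mem_desG_insertMax_of_gt G σ p h, h, show ¬ j + 1 < p by omega,
      show j ≠ p by omega]

lemma majG_insertMax :
    majG G (insertMax σ p) + (if (p : ℕ) ∈ desG (G.comap Fin.castSucc) σ then (p : ℕ) else 0) =
      majG (G.comap Fin.castSucc) σ + #((desG (G.comap Fin.castSucc) σ).filter ((p : ℕ) < ·)) +
        if (p : ℕ) ∈ range m \ posAdjLast G σ then (p : ℕ) + 1 else 0 := by
  rw [majG_eq_sum_desG, majG_eq_sum_desG, desG_insertMax]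
  set D := desG (G.comap Fin.castSucc) σ
  have hdisj : Disjoint (D.filter ((p : ℕ) < ·)) ((range m \ posAdjLast G σ).filter (· = p)) := by
    simp only [disjoint_left, mem_filter]
    omega
  have hdisj' : Disjoint (D.filter (· < (p : ℕ)))
      (((D.filter ((p : ℕ) < ·)) ∪ (range m \ posAdjLast G σ).filter (· = p)).map
        (addRightEmbedding 1)) := by
    simp only [disjoint_left, mem_filter, mem_map, mem_union, addRightEmbedding_apply]
    omega
  rw [sum_union hdisj', sum_map,
    sum_union hdisj, sum_filter, sum_filter, sum_filter, card_filter]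
  simp only [addRightEmbedding_apply, sum_ite_eq']
  have hsplit : ∑ i ∈ D, i + ∑ i ∈ D, (if (p : ℕ) < i then 1 else 0) =
      ∑ i ∈ D, (if i < (p : ℕ) then i else 0) + ∑ i ∈ D, (if (p : ℕ) < i then i + 1 else 0) +
        if (p : ℕ) ∈ D then (p : ℕ) else 0 := by
    rw [← sum_add_distrib, ← sum_ite_eq' D (p : ℕ) (fun i => i), ← sum_add_distrib,
      ← sum_add_distrib]
    exact sum_congr rfl fun i _ => by split_ifs <;> omega
  omega

lemma disjoint_posAdjLast_desG (hG : DyckGraph G) :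
    Disjoint (posAdjLast G σ) (desG (G.comap Fin.castSucc) σ) := by
  rw [disjoint_left]
  rintro (_ | j) hS hD
  · simp [desG] at hD
  obtain ⟨-, hjm, hadj⟩ := mem_filter.mp hS
  obtain ⟨hlt, hnadj⟩ := (succ_mem_desG_iff hjm).mp hD
  exact hnadj (hG _ _ _ _ hadj le_rfl (Fin.castSucc_lt_castSucc_iff.mpr hlt) (Fin.le_last _))

end Descents

section InsertionShift

variable {U : Finset ℕ} {p q : ℕ}

/-- `st_G(insertMax σ p) - st_H(σ)` (see `stG_insertMax`), where `U` collects the positions of `σ`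
holding a neighbour of `m` and the `G`-descents of `σ`. -/
def insertionShift (m : ℕ) (U : Finset ℕ) (p : ℕ) : ℕ :=
  #(U.filter (p ≤ ·)) + if p < m ∧ p ∉ U then p + 1 else 0

lemma card_filter_le_eq_add (hpq : p ≤ q) :
    #(U.filter (p ≤ ·)) = #(U.filter (q ≤ ·)) + #(U.filter fun i => p ≤ i ∧ i < q) := by
  rw [← card_union_of_disjoint (disjoint_filter.mpr fun _ _ h h' => by omega), ← filter_or]
  exact congrArg card (filter_congr fun i _ => by omega)

lemma card_filter_Ico_add_le (hpq : p < q) :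
    #(U.filter fun i => p ≤ i ∧ i < q) + (if p ∈ U then 0 else 1) ≤ q - p := by
  split_ifs with hp
  · calc #(U.filter fun i => p ≤ i ∧ i < q) ≤ #(Ico p q) :=
          card_le_card fun i hi => by simp only [mem_filter, mem_Ico] at hi ⊢; omega
      _ = q - p := Nat.card_Ico p q
  · have : #(U.filter fun i => p ≤ i ∧ i < q) ≤ #(Ioo p q) := card_le_card fun i hi => by
      simp only [mem_filter, mem_Ioo] at hi ⊢
      exact ⟨lt_of_le_of_ne hi.2.1 fun h => hp (h ▸ hi.1), hi.2.2⟩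
    rw [Nat.card_Ioo] at this
    omega

lemma one_le_card_filter_Ico (hp : p ∈ U) (hpq : p < q) :
    1 ≤ #(U.filter fun i => p ≤ i ∧ i < q) :=
  card_pos.mpr ⟨p, mem_filter.mpr ⟨hp, le_rfl, hpq⟩⟩

lemma insertionShift_injOn (m : ℕ) (U : Finset ℕ) :
    Set.InjOn (insertionShift m U) (range (m + 1)) := by
  intro p hp q hq h
  by_contra hne
  wlog hpq : p < q generalizing p q
  · exact this hq hp h.symm (Ne.symm hne) (by omega)
  have hsplit := card_filter_le_eq_add (U := U) hpq.le
  have hmid := card_filter_Ico_add_le (U := U) hpq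
  have hpos := fun hpU => one_le_card_filter_Ico (U := U) hpU hpq
  simp only [coe_range, Set.mem_Iio] at hp hq
  unfold insertionShift at h
  by_cases hpU : p ∈ U
  · rw [if_neg fun h => h.2 hpU] at h
    rw [if_pos hpU] at hmid
    have := hpos hpU
    split_ifs at h <;> omega
  · rw [if_pos ⟨by omega, hpU⟩] at h
    rw [if_neg hpU] at hmid
    split_ifs at h <;> omega

lemma insertionShift_mapsTo {m : ℕ} (hU : U ⊆ range m) :
    Set.MapsTo (insertionShift m U) (range (m + 1)) (range (m + 1)) := by
  intro p hp
  simp only [coe_range, Set.mem_Iio] at hp ⊢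
  have hm : #(U.filter (m ≤ ·)) = 0 :=
    card_eq_zero.mpr (filter_eq_empty_iff.mpr fun i hi => by have := mem_range.mp (hU hi); omega)
  rcases lt_or_ge p m with hpm | hpm
  · have hsplit := card_filter_le_eq_add (U := U) hpm.le
    have hmid := card_filter_Ico_add_le (U := U) hpm
    unfold insertionShift
    by_cases hpU : p ∈ U
    · rw [if_neg fun h => h.2 hpU]
      rw [if_pos hpU] at hmid
      omega
    · rw [if_pos ⟨hpm, hpU⟩]
      rw [if_neg hpU] at hmid
      omega
  · obtain rfl : p = m := by omega
    simp [insertionShift, hm]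

lemma sum_comp_insertionShift {M : Type*} [AddCommMonoid M] {m : ℕ} (hU : U ⊆ range m)
    (f : ℕ → M) : ∑ p ∈ range (m + 1), f (insertionShift m U p) = ∑ k ∈ range (m + 1), f k :=
  sum_nbij _ (insertionShift_mapsTo hU) (insertionShift_injOn m U)
    (surjOn_of_injOn_of_card_le _ (insertionShift_mapsTo hU) (insertionShift_injOn m U) le_rfl)
    fun _ _ => rfl

lemma card_filter_add_eq_insertionShift {m : ℕ} {S D : Finset ℕ} (hSD : Disjoint S D)
    (hD : D ⊆ range m) (p : ℕ) :
    #(S.filter (p ≤ ·)) + #(D.filter (p < ·)) + (if p ∈ range m \ S then p + 1 else 0) =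
      (if p ∈ D then p else 0) + insertionShift m (S ∪ D) p := by
  have hunion : #((S ∪ D).filter (p ≤ ·)) = #(S.filter (p ≤ ·)) + #(D.filter (p ≤ ·)) := by
    rw [filter_union, card_union_of_disjoint (disjoint_filter_filter hSD)]
  have hself : #(D.filter (p ≤ ·)) = #(D.filter (p < ·)) + if p ∈ D then 1 else 0 := by
    rw [card_filter, card_filter, ← sum_ite_eq' D p (fun _ => 1), ← sum_add_distrib]
    exact sum_congr rfl fun i _ => by split_ifs <;> omega
  unfold insertionShift
  rw [hunion, hself]
  by_cases hp : p ∈ D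
  · have hpS : p ∉ S := disjoint_right.mp hSD hp
    have hpm : p < m := mem_range.mp (hD hp)
    simp [hp, hpS, hpm]
    omega
  · simp [hp]

end InsertionShift

lemma stG_insertMax {m : ℕ} {G : SimpleGraph (Fin (m + 1))} (hG : DyckGraph G)
    (σ : Equiv.Perm (Fin m)) (p : Fin (m + 1)) :
    stG G (insertMax σ p) = stG (G.comap Fin.castSucc) σ +
      insertionShift m (posAdjLast G σ ∪ desG (G.comap Fin.castSucc) σ) p := by
  have hinv := invG_insertMax G σ p
  have hmaj := majG_insertMax G σ p
  have hshift := card_filter_add_eq_insertionShift (disjoint_posAdjLast_desG G σ hG)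
    (desG_subset_range _ σ) p
  unfold stG
  omega

/-- Insertion lemma: for a Dyck graph `G` on `[m+1]` with restriction `H` to `[m]`,
summing `t^{st_G(τ)}` over the `m+1` permutations `τ` obtained by inserting the
maximal letter into `σ` gives `[m+1]_t · t^{st_H(σ)}`. -/
theorem stmt6 (m : ℕ) (G : SimpleGraph (Fin (m + 1))) (hG : DyckGraph G)
    (σ : Equiv.Perm (Fin m)) :
    ∑ τ : Equiv.Perm (Fin (m + 1)),
        (if Restricts τ σ then (Polynomial.X : Polynomial ℚ) ^ stG G τ else 0) =
      (∑ k ∈ Finset.range (m + 1), (Polynomial.X : Polynomial ℚ) ^ k) *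
        (Polynomial.X : Polynomial ℚ) ^ stG (G.comap Fin.castSucc) σ := by
  set U := posAdjLast G σ ∪ desG (G.comap Fin.castSucc) σ
  have hU : U ⊆ range m := union_subset (filter_subset _ _) (desG_subset_range _ σ)
  rw [sum_restricts_eq_sum_insertMax σ fun τ => (Polynomial.X : Polynomial ℚ) ^ stG G τ]
  simp_rw [stG_insertMax hG, pow_add]
  rw [← mul_sum,
    Fin.sum_univ_eq_sum_range fun p => (Polynomial.X : Polynomial ℚ) ^ insertionShift m U p,
    sum_comp_insertionShift hU, mul_comm]
end

section
/- Let G_n be the path graph on [n] with edges (i, i+1). The noncommutative LLT polynomial LLT_{G_n} = sum over all words w of length n in the free algebra of t^{asc(w)} w equals sum over compositions I of n of (t-1)^{n - l(I)} Lambda^I, where Lambda_n is embedded in WQSym as M_{12...n} (the sum of strictly increasing words) and Lambda^I = Lambda_{i_1}...Lambda_{i_r}. -/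
open scoped Classical

/-- The packing of a word over the ordered alphabet `ℕ`: each letter is replaced by
its rank among the distinct letters occurring in the word. -/
def packL (w : List ℕ) : List ℕ :=
  w.map fun a => (w.dedup.filter fun b => decide (b ≤ a)).length

/-- A word of positive integers is packed if its letters are exactly `1, ..., k`. -/
def IsPackedL (w : List ℕ) : Prop :=
  (∀ a ∈ w, 0 < a) ∧ ∀ a ∈ w, ∀ m, 0 < m → m < a → m ∈ w

/-- The product (concatenation convolution) of formal series of words, realizing the
product of polynomials in noncommuting variables: homogeneous components are
`(f * g)(x) = Σ_{x = x₁ x₂} f(x₁) g(x₂)`. -/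
noncomputable def conv {R : Type*} [Semiring R] (f g : List ℕ → R) : List ℕ → R :=
  fun x => ∑ k ∈ Finset.range (x.length + 1), f (x.take k) * g (x.drop k)

/-- The unit series. -/
noncomputable def oneW {R : Type*} [Semiring R] : List ℕ → R :=
  fun x => if x = [] then 1 else 0

/-- The monomial basis of `WQSym`: `M_u = Σ_{pack(w) = u} w`, as a series. -/
noncomputable def MuL {R : Type*} [Semiring R] (u : List ℕ) : List ℕ → R :=
  fun x => if packL x = u then 1 else 0

/-- Product of a list of series. -/
noncomputable def prodConv {R : Type*} [Semiring R] : List (List ℕ → R) → (List ℕ → R)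
  | [] => oneW
  | f :: fs => conv f (prodConv fs)

/-- The number of ascents of a word: positions `i` with `w_i < w_{i+1}`. -/
def ascList (w : List ℕ) : ℕ :=
  ((w.zip w.tail).filter fun p => decide (p.1 < p.2)).length

/-- The elementary noncommutative symmetric function `Λ_m`, embedded in the free
algebra as the sum of strictly increasing words of length `m`. -/
noncomputable def Lam (m : ℕ) : List ℕ → Polynomial ℚ :=
  fun w => if w.length = m ∧ w.Chain' (· < ·) then 1 else 0

/-!
`Λ^I` takes the value `1` at a word `w` exactly when `I` cuts `w` into strictly increasing
factors, and `0` otherwise. A composition of `n + 2` either starts with a block `1`, or arises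
from a composition of `n + 1` by enlarging its first block; in the second case it cuts
`a :: b :: v` into increasing factors iff `a < b` and the original composition cuts `b :: v`.
Hence the right-hand side at `a :: b :: v` is `1 + [a < b] (t - 1)` times its value at `b :: v`,
which is the recursion `t ^ asc (a :: b :: v) = t ^ [a < b] * t ^ asc (b :: v)`.
-/

def HasIncreasingBlocks : List ℕ → List ℕ → Prop
  | [], w => w = []
  | m :: l, w =>
    m ≤ w.length ∧ (w.take m).IsChain (· < ·) ∧ HasIncreasingBlocks l (w.drop m)

theorem HasIncreasingBlocks.length_eq :
    ∀ {l w : List ℕ}, HasIncreasingBlocks l w → w.length = l.sum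
  | [], _, h => by simp [show _ = [] from h]
  | m :: l, w, ⟨hm, _, h⟩ => by
    rw [List.sum_cons, ← h.length_eq, List.length_drop]
    omega

theorem hasIncreasingBlocks_one_cons (l : List ℕ) (a : ℕ) (w : List ℕ) :
    HasIncreasingBlocks (1 :: l) (a :: w) ↔ HasIncreasingBlocks l w := by
  simp [HasIncreasingBlocks]

theorem hasIncreasingBlocks_add_two_cons_cons (m : ℕ) (l : List ℕ) (a b : ℕ) (v : List ℕ) :
    HasIncreasingBlocks ((m + 2) :: l) (a :: b :: v) ↔
      a < b ∧ HasIncreasingBlocks ((m + 1) :: l) (b :: v) := by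
  simp only [HasIncreasingBlocks, List.length_cons, List.take_succ_cons, List.drop_succ_cons,
    List.isChain_cons_cons, Nat.add_le_add_iff_right]
  tauto

theorem conv_Lam (m : ℕ) (g : List ℕ → Polynomial ℚ) (w : List ℕ) :
    conv (Lam m) g w =
      if m ≤ w.length ∧ (w.take m).IsChain (· < ·) then g (w.drop m) else 0 := by
  have hterm : ∀ k ∈ Finset.range (w.length + 1), Lam m (w.take k) * g (w.drop k) =
      if m = k then (if (w.take m).IsChain (· < ·) then g (w.drop m) else 0) else 0 := by
    intro k hk
    have hlen : (w.take k).length = k :=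
      List.length_take_of_le (Nat.lt_succ_iff.mp (Finset.mem_range.mp hk))
    by_cases h : m = k
    · subst h
      simp [Lam, hlen, List.Chain']
    · simp [Lam, hlen, Ne.symm h, h]
  simp only [conv, Finset.sum_congr rfl hterm, Finset.sum_ite_eq, Finset.mem_range,
    Nat.lt_succ_iff, ite_and]

theorem prodConv_map_Lam (l w : List ℕ) :
    prodConv (l.map Lam) w = if HasIncreasingBlocks l w then 1 else 0 := by
  induction l generalizing w with
  | nil => exact if_congr Iff.rfl rfl rfl
  | cons m l ih =>
    rw [List.map_cons, prodConv, conv_Lam, ih]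
    by_cases h : HasIncreasingBlocks (m :: l) w
    · rw [if_pos h, if_pos ⟨h.1, h.2.1⟩, if_pos h.2.2]
    · rw [if_neg h]
      split_ifs with h1 h2
      exacts [absurd ⟨h1.1, h1.2, h2⟩ h, rfl, rfl]

namespace Composition

variable {n : ℕ}

theorem exists_blocks_eq_cons (c : Composition (n + 1)) : ∃ b l, c.blocks = (b + 1) :: l := by
  obtain ⟨b, l, h⟩ := List.exists_cons_of_ne_nil (c.blocks_eq_nil.not.mpr n.succ_ne_zero)
  obtain ⟨b, rfl⟩ :=
    Nat.exists_eq_add_one_of_ne_zero (c.blocks_pos (h ▸ List.mem_cons_self)).ne'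
  exact ⟨b, l, h⟩

theorem subsingleton_of_le_one (hn : n ≤ 1) : Subsingleton (Composition n) :=
  Fintype.card_le_one_iff_subsingleton.mp (by simp [composition_card, Nat.sub_eq_zero_of_le hn])

def consOne (c : Composition n) : Composition (n + 1) where
  blocks := 1 :: c.blocks
  blocks_pos hi := (List.mem_cons.mp hi).elim (fun h => h ▸ Nat.one_pos) c.blocks_pos
  blocks_sum := by rw [List.sum_cons, c.blocks_sum, add_comm]

def succHead (c : Composition (n + 1)) : Composition (n + 2) where
  blocks := (c.blocks.headI + 1) :: c.blocks.tail
  blocks_pos hi := (List.mem_cons.mp hi).elim (fun h => h ▸ Nat.succ_pos _)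
    (fun h => c.blocks_pos (List.mem_of_mem_tail h))
  blocks_sum := by
    obtain ⟨b, l, h⟩ := c.exists_blocks_eq_cons
    have := c.blocks_sum
    simp only [h, List.headI_cons, List.tail_cons, List.sum_cons] at this ⊢
    omega

@[simp]
theorem consOne_blocks (c : Composition n) : c.consOne.blocks = 1 :: c.blocks := rfl

theorem succHead_blocks {c : Composition (n + 1)} {b : ℕ} {l : List ℕ}
    (h : c.blocks = (b + 1) :: l) : c.succHead.blocks = (b + 2) :: l := by
  simp [succHead, h]

@[simp]
theorem consOne_length (c : Composition n) : c.consOne.length = c.length + 1 := by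
  simp [length]

@[simp]
theorem succHead_length (c : Composition (n + 1)) : c.succHead.length = c.length := by
  obtain ⟨b, l, h⟩ := c.exists_blocks_eq_cons
  simp [length, succHead_blocks h, h]

theorem bijective_sumElim_consOne_succHead :
    Function.Bijective
      (Sum.elim consOne succHead : Composition (n + 1) ⊕ Composition (n + 1) → _) := by
  constructor
  · rintro (c | c) (d | d) hcd <;> simp only [Sum.elim_inl, Sum.elim_inr] at hcd
    · exact congrArg Sum.inl (Composition.ext (List.cons_injective (congrArg blocks hcd)))
    · obtain ⟨b, l, h⟩ := d.exists_blocks_eq_cons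
      simpa [succHead_blocks h] using congrArg blocks hcd
    · obtain ⟨b, l, h⟩ := c.exists_blocks_eq_cons
      simpa [succHead_blocks h] using congrArg blocks hcd
    · obtain ⟨b, l, hc⟩ := c.exists_blocks_eq_cons
      obtain ⟨b', l', hd⟩ := d.exists_blocks_eq_cons
      have := congrArg blocks hcd
      simp only [succHead_blocks hc, succHead_blocks hd, List.cons.injEq] at this
      exact congrArg Sum.inr
        (Composition.ext (by rw [hc, hd, this.2, Nat.add_right_cancel this.1]))
  · intro c
    obtain ⟨b, l, h⟩ := c.exists_blocks_eq_cons
    have hsum := c.blocks_sum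
    have hpos : ∀ i ∈ l, 0 < i := fun i hi => c.blocks_pos (h ▸ List.mem_cons_of_mem _ hi)
    rw [h, List.sum_cons] at hsum
    rcases b with _ | b
    · refine ⟨.inl ⟨l, hpos _, by omega⟩, Composition.ext ?_⟩
      simp [h]
    · refine ⟨.inr ⟨(b + 1) :: l, ?_, by simp only [List.sum_cons]; omega⟩,
        Composition.ext ?_⟩
      · exact fun hi => (List.mem_cons.mp hi).elim (fun h => h ▸ Nat.succ_pos _) (hpos _)
      · simp [succHead, h]

theorem sum_add_two {M : Type*} [AddCommMonoid M] (f : Composition (n + 2) → M) :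
    ∑ c, f c = ∑ c : Composition (n + 1), (f c.consOne + f c.succHead) := by
  rw [Finset.sum_add_distrib, ← Fintype.sum_bijective _ bijective_sumElim_consOne_succHead
    (f ∘ Sum.elim consOne succHead) f fun _ => rfl, Fintype.sum_sum_type]
  rfl

end Composition

theorem ascList_cons_cons (a b : ℕ) (v : List ℕ) :
    ascList (a :: b :: v) = (if a < b then 1 else 0) + ascList (b :: v) := by
  by_cases h : a < b <;> simp [ascList, h, add_comm]

theorem sum_compositions_sub_one_pow_eq_pow_ascList {R : Type*} [CommRing R] (t : R) :
    ∀ (n : ℕ) (w : List ℕ), w.length = n →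
    ∑ c : Composition n,
      (if HasIncreasingBlocks c.blocks w then (t - 1) ^ (n - c.length) else 0) = t ^ ascList w
  | 0, [], _ => by
    have := Composition.subsingleton_of_le_one zero_le_one
    rw [Fintype.sum_subsingleton _ (Composition.ones 0)]
    simp [HasIncreasingBlocks, ascList]
  | 1, [a], _ => by
    have := Composition.subsingleton_of_le_one le_rfl
    rw [Fintype.sum_subsingleton _ (Composition.ones 1)]
    simp [HasIncreasingBlocks, ascList]
  | n + 2, a :: b :: v, hw => by
    have hv : v.length = n := by simpa using hw
    have hterm : ∀ c : Composition (n + 1),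
        ((if HasIncreasingBlocks c.consOne.blocks (a :: b :: v)
            then (t - 1) ^ (n + 2 - c.consOne.length) else 0) +
          if HasIncreasingBlocks c.succHead.blocks (a :: b :: v)
            then (t - 1) ^ (n + 2 - c.succHead.length) else 0) =
        (if a < b then t else 1) *
          if HasIncreasingBlocks c.blocks (b :: v) then (t - 1) ^ (n + 1 - c.length) else 0 := by
      intro c
      obtain ⟨m, l, h⟩ := c.exists_blocks_eq_cons
      have hlen : c.length ≤ n + 1 := c.length_le
      rw [Composition.consOne_blocks, hasIncreasingBlocks_one_cons, Composition.succHead_blocks h,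
        hasIncreasingBlocks_add_two_cons_cons, ← h, Composition.consOne_length,
        Composition.succHead_length, show n + 2 - (c.length + 1) = n + 1 - c.length by omega,
        show n + 2 - c.length = n + 1 - c.length + 1 by omega]
      by_cases hc : HasIncreasingBlocks c.blocks (b :: v)
      · by_cases hab : a < b
        · simp only [hab, hc, and_self, if_true]
          ring
        · simp [hab, hc]
      · simp [hc]
    rw [Composition.sum_add_two, Finset.sum_congr rfl fun c _ => hterm c, ← Finset.mul_sum,
      sum_compositions_sub_one_pow_eq_pow_ascList t (n + 1) (b :: v) (by simp [hv]),
      ascList_cons_cons]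
    split_ifs <;> ring
  | 0, _ :: _, hw | 1, [], hw | 1, _ :: _ :: _, hw | _ + 2, [], hw | _ + 2, [_], hw => by
    simp at hw

/-- For the path graph `G_n`, the noncommutative LLT polynomial
`LLT_{G_n} = Σ_{w ∈ A^n} t^{asc(w)} w` equals
`Σ_{I ⊨ n} (t-1)^{n-ℓ(I)} Λ^I`. -/
theorem stmt13 (n : ℕ) (w : List ℕ) :
    (if w.length = n then (Polynomial.X : Polynomial ℚ) ^ ascList w else 0) =
      ∑ c : Composition n,
        ((Polynomial.X : Polynomial ℚ) - 1) ^ (n - c.length) *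
          prodConv (c.blocks.map Lam) w := by
  simp only [prodConv_map_Lam, mul_ite, mul_one, mul_zero]
  split_ifs with hw
  · exact (sum_compositions_sub_one_pow_eq_pow_ascList _ n w hw).symm
  · exact (Finset.sum_eq_zero fun c _ => if_neg fun h => hw (h.length_eq.trans c.blocks_sum)).symm
end

section
/- The set of packed words with a fixed standardization sigma in S_n is in bijection with the subsets of A(sigma), the set of advances of sigma (values i such that i+1 appears to the right of i in sigma); hence this set of words has cardinality 2^{|A(sigma)|} and carries a natural boolean lattice structure under the strong refinement order. -/
open scoped Classical

/-- The standardization of a word: the (1-based one-line values of the) permutation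
with the same inversions, ties broken left to right. -/
noncomputable def stdF {n : ℕ} (w : Fin n → ℕ) : Fin n → ℕ := fun i =>
  (Finset.univ.filter fun j => w j < w i ∨ (w j = w i ∧ j ≤ i)).card

/-- The advances of `σ`: values `i` (0-based) such that `i + 1` appears to the
right of `i` in the one-line notation of `σ`. -/
noncomputable def advances {n : ℕ} (σ : Equiv.Perm (Fin n)) : Finset (Fin n) :=
  Finset.univ.filter fun i : Fin n =>
    ∃ h : (i : ℕ) + 1 < n, σ⁻¹ i < σ⁻¹ ⟨(i : ℕ) + 1, h⟩

/-! Read a word `u` in the order `σ⁻¹`, i.e. look at `v = u ∘ σ⁻¹`. Then `u` is packed with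
standardization `σ` iff `v` starts at `1` and every step `v (j + 1) - v j` is `1`, or `0` where `j`
is an advance of `σ` (equal letters must occur left to right). Such a `v` is determined by the
set of advances at which it rises, and every subset of the advances occurs. -/

open Finset

theorem card_filter_le_eq_iff_strictMono {α β : Type*} [Fintype α] [LinearOrder β] {m : ℕ}
    (key : α → β) (e : α ≃ Fin m) :
    (∀ a, #{b | key b ≤ key a} = e a + 1) ↔ StrictMono (key ∘ e.symm) := by
  constructor
  · intro h i j hij
    by_contra! hji
    have hcard : #{b | key b ≤ key (e.symm j)} ≤ #{b | key b ≤ key (e.symm i)} :=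
      card_le_card fun b hb => by
        simp only [mem_filter, mem_univ, true_and] at hb ⊢
        exact hb.trans hji
    rw [h, h, e.apply_symm_apply, e.apply_symm_apply] at hcard
    rw [Fin.lt_def] at hij
    omega
  · intro h a
    have hset : ({b | key b ≤ key a} : Finset α) = (Iic (e a)).map e.symm.toEmbedding := by
      ext b
      simp only [mem_filter, mem_univ, true_and, mem_map_equiv, Equiv.symm_symm, mem_Iic]
      rw [← h.le_iff_le]
      simp only [Function.comp_apply, Equiv.symm_apply_apply]
    rw [hset, card_map, Fin.card_Iic]

theorem stdF_eq_succ_iff {m : ℕ} (w : Fin m → ℕ) (σ : Equiv.Perm (Fin m)) :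
    (∀ p, stdF w p = σ p + 1) ↔ StrictMono fun i => toLex (w (σ⁻¹ i), σ⁻¹ i) := by
  have hstd : ∀ p, stdF w p = #{j | toLex (w j, j) ≤ toLex (w p, p)} := by
    intro p
    simp only [stdF, Prod.Lex.toLex_le_toLex]
  simp only [hstd]
  exact card_filter_le_eq_iff_strictMono (fun j => toLex (w j, j)) σ

theorem isPackedF_comp_perm {m : ℕ} (w : Fin m → ℕ) (e : Equiv.Perm (Fin m)) :
    IsPackedF (w ∘ e) ↔ IsPackedF w := by
  constructor
  · rintro ⟨hpos, hgap⟩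
    refine ⟨fun i => by simpa using hpos (e.symm i), fun i m hm hmi => ?_⟩
    obtain ⟨j, hj⟩ := hgap (e.symm i) m hm (by simpa using hmi)
    exact ⟨e j, hj⟩
  · rintro ⟨hpos, hgap⟩
    refine ⟨fun i => hpos (e i), fun i m hm hmi => ?_⟩
    obtain ⟨j, hj⟩ := hgap (e i) m hm hmi
    exact ⟨e.symm j, by simpa using hj⟩

section Sorted

variable {n : ℕ}

theorem Fin.exists_apply_eq_of_le_succ {v : Fin (n + 1) → ℕ}
    (hstep : ∀ j : Fin n, v j.succ ≤ v j.castSucc + 1) {m : ℕ} (h0 : v 0 ≤ m) :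
    ∀ i, m ≤ v i → ∃ k, v k = m := by
  refine Fin.induction (fun hm => ⟨0, by omega⟩) fun j ih hm => ?_
  by_cases hj : m ≤ v j.castSucc
  · exact ih hj
  · exact ⟨j.succ, by have := hstep j; omega⟩

theorem Monotone.isPackedF_iff {v : Fin (n + 1) → ℕ} (hv : Monotone v) :
    IsPackedF v ↔ v 0 = 1 ∧ ∀ j : Fin n, v j.succ ≤ v j.castSucc + 1 := by
  constructor
  · rintro ⟨hpos, hgap⟩
    refine ⟨?_, fun j => ?_⟩
    · by_contra h
      have h1 : 1 < v 0 := by have := hpos 0; omega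
      obtain ⟨i, hi⟩ := hgap 0 1 one_pos h1
      have := hv (Fin.zero_le i)
      omega
    · by_contra! h
      obtain ⟨i, hi⟩ := hgap j.succ (v j.castSucc + 1) (by omega) h
      rcases le_or_gt i j.castSucc with hij | hij
      · have := hv hij
        omega
      · have := hv (Fin.castSucc_lt_iff_succ_le.mp hij)
        omega
  · rintro ⟨h0, hstep⟩
    refine ⟨fun i => by have := hv (Fin.zero_le i); omega, fun i m hm hmi => ?_⟩
    exact Fin.exists_apply_eq_of_le_succ hstep (by omega) i hmi.le

theorem isPackedF_and_stdF_eq_iff (w : Fin (n + 1) → ℕ) (σ : Equiv.Perm (Fin (n + 1))) :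
    (IsPackedF w ∧ ∀ p, stdF w p = σ p + 1) ↔
      w (σ⁻¹ 0) = 1 ∧ ∀ j : Fin n, w (σ⁻¹ j.succ) = w (σ⁻¹ j.castSucc) + 1 ∨
        (w (σ⁻¹ j.succ) = w (σ⁻¹ j.castSucc) ∧ σ⁻¹ j.castSucc < σ⁻¹ j.succ) := by
  rw [stdF_eq_succ_iff, ← isPackedF_comp_perm w (σ⁻¹ : Equiv.Perm _)]
  have hmono (h : StrictMono fun i => toLex (w (σ⁻¹ i), σ⁻¹ i)) :
      Monotone fun i => w (σ⁻¹ i) :=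
    fun i j hij => Prod.Lex.monotone_fst _ _ (h.monotone hij)
  constructor
  · rintro ⟨hpack, hlex⟩
    obtain ⟨h0, hstep⟩ := (hmono hlex).isPackedF_iff.mp hpack
    refine ⟨h0, fun j => ?_⟩
    have := hstep j
    rcases Prod.Lex.toLex_lt_toLex.mp (Fin.strictMono_iff_lt_succ.mp hlex j) with h | h
    · left
      omega
    · exact Or.inr ⟨h.1.symm, h.2⟩
  · rintro ⟨h0, hloc⟩
    have hlex : StrictMono fun i => toLex (w (σ⁻¹ i), σ⁻¹ i) :=
      Fin.strictMono_iff_lt_succ.mpr fun j => Prod.Lex.toLex_lt_toLex.mpr <|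
        (hloc j).imp (fun h => by omega) fun h => ⟨h.1.symm, h.2⟩
    refine ⟨(hmono hlex).isPackedF_iff.mpr ⟨h0, fun j => ?_⟩, hlex⟩
    rcases hloc j with h | h <;> omega

end Sorted

namespace PackedWord

variable {n : ℕ} (σ : Equiv.Perm (Fin (n + 1)))

noncomputable def advanceSteps : Finset (Fin n) :=
  {j | σ⁻¹ j.castSucc < σ⁻¹ j.succ}

theorem advances_eq_map_advanceSteps :
    advances σ = (advanceSteps σ).map Fin.castSuccEmb := by
  ext i
  induction i using Fin.lastCases with
  | last => simp [advances]
  | cast j =>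
    simp only [advances, advanceSteps, mem_filter, mem_univ, true_and, mem_map,
      Fin.castSuccEmb_apply, Fin.castSucc_inj, exists_eq_right, Fin.val_castSucc]
    exact ⟨fun ⟨_, h⟩ => h, fun h => ⟨by omega, h⟩⟩

noncomputable def sortedWord (S : Finset (Fin n)) : Fin (n + 1) → ℕ :=
  Fin.induction 1 fun j a => if j ∈ advanceSteps σ ∧ j ∉ S then a else a + 1

theorem sortedWord_zero (S : Finset (Fin n)) : sortedWord σ S 0 = 1 :=
  Fin.induction_zero ..

theorem sortedWord_succ (S : Finset (Fin n)) (j : Fin n) :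
    sortedWord σ S j.succ = if j ∈ advanceSteps σ ∧ j ∉ S then sortedWord σ S j.castSucc
      else sortedWord σ S j.castSucc + 1 :=
  Fin.induction_succ ..

theorem sortedWord_le (S : Finset (Fin n)) (i : Fin (n + 1)) : sortedWord σ S i ≤ i + 1 := by
  induction i using Fin.induction with
  | zero => simp [sortedWord_zero]
  | succ j ih =>
    rw [sortedWord_succ, Fin.val_succ]
    simp only [Fin.val_castSucc] at ih
    split_ifs <;> omega

noncomputable def wordOfSubset (S : Finset (Fin n)) (p : Fin (n + 1)) : Fin (n + 2) :=
  ⟨sortedWord σ S (σ p), by have := sortedWord_le σ S (σ p); omega⟩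

@[simp]
theorem wordOfSubset_val (S : Finset (Fin n)) (p : Fin (n + 1)) :
    (wordOfSubset σ S p : ℕ) = sortedWord σ S (σ p) :=
  rfl

noncomputable def advanceRises (w : Fin (n + 1) → ℕ) : Finset (Fin n) :=
  {j ∈ advanceSteps σ | w (σ⁻¹ j.succ) = w (σ⁻¹ j.castSucc) + 1}

theorem wordOfSubset_isPackedF_stdF (S : Finset (Fin n)) :
    IsPackedF (fun p => (wordOfSubset σ S p : ℕ)) ∧
      ∀ p, stdF (fun q => (wordOfSubset σ S q : ℕ)) p = σ p + 1 := by
  rw [isPackedF_and_stdF_eq_iff]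
  simp only [wordOfSubset_val, Equiv.Perm.coe_inv, Equiv.apply_symm_apply]
  refine ⟨sortedWord_zero σ S, fun j => ?_⟩
  rw [sortedWord_succ]
  split_ifs with h
  · exact Or.inr ⟨rfl, by simpa [advanceSteps] using h.1⟩
  · exact Or.inl rfl

theorem advanceRises_wordOfSubset {S : Finset (Fin n)} (hS : S ⊆ advanceSteps σ) :
    advanceRises σ (fun p => (wordOfSubset σ S p : ℕ)) = S := by
  ext j
  simp only [advanceRises, wordOfSubset_val, mem_filter, Equiv.Perm.coe_inv,
    Equiv.apply_symm_apply, sortedWord_succ]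
  have := @hS j
  split_ifs with h
  · simp only [Nat.left_eq_add, one_ne_zero, and_false, false_iff]
    tauto
  · simp only [and_true]
    tauto

theorem wordOfSubset_advanceRises (u : Fin (n + 1) → Fin (n + 2))
    (hu : IsPackedF (fun p => (u p : ℕ)) ∧ ∀ p, stdF (fun q => (u q : ℕ)) p = σ p + 1) :
    wordOfSubset σ (advanceRises σ fun p => (u p : ℕ)) = u := by
  obtain ⟨h0, hloc⟩ := (isPackedF_and_stdF_eq_iff _ σ).mp hu
  suffices h : ∀ i, sortedWord σ (advanceRises σ fun p => (u p : ℕ)) i = u (σ⁻¹ i) by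
    funext p
    ext
    simpa using h (σ p)
  intro i
  induction i using Fin.induction with
  | zero => rw [sortedWord_zero, h0]
  | succ j ih =>
    rw [sortedWord_succ, ih]
    simp only [advanceRises, advanceSteps, mem_filter, mem_univ, true_and]
    split_ifs with h <;> rcases hloc j with h' | h' <;> omega

end PackedWord

open PackedWord in
/-- The packed words with standardization `σ` are in bijection with the subsets of
the set of advances of `σ`; in particular there are `2^{|A(σ)|}` of them. -/
theorem stmt15 (n : ℕ) (σ : Equiv.Perm (Fin n)) :
    (Finset.univ.filter fun u : Fin n → Fin (n + 1) =>
        IsPackedF (fun i => (u i : ℕ)) ∧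
        ∀ i, stdF (fun j => (u j : ℕ)) i = (σ i : ℕ) + 1).card =
      2 ^ (advances σ).card := by
  cases n with
  | zero => simp [advances, IsPackedF]
  | succ n =>
    rw [advances_eq_map_advanceSteps, card_map, ← card_powerset]
    refine card_nbij' (fun u => advanceRises σ fun p => (u p : ℕ)) (wordOfSubset σ)
      (fun u _ => mem_powerset.mpr (filter_subset _ _))
      (fun S _ => mem_filter.mpr ⟨mem_univ _, wordOfSubset_isPackedF_stdF σ S⟩)
      (fun u hu => wordOfSubset_advanceRises σ u (mem_filter.mp hu).2)
      (fun S hS => advanceRises_wordOfSubset σ (mem_powerset.mp hS))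
end
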